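/- In S = (IO∞(ℤ))ⁿ, every congruence 𝔠 with Δ ⊆ 𝔠 ⊆ σ_[i] for some i ∈ {1,…,n} (where Δ is the identity congruence) satisfies 𝔠 = Δ or 𝔠 = σ_[i]; i.e., σ_[i] covers the identity congruence in the congruence lattice. -/

import Mathlib

/-- A partial injective self-map of ℤ (encoded as a `PEquiv`) is monotone. -/
def PMono (f : ℤ ≃. ℤ) : Prop :=
  ∀ x y a b : ℤ, a ∈ f x → b ∈ f y → x ≤ y → a ≤ b

/-- Domain of a partial injective self-map of ℤ. -/
def PDom (f : ℤ ≃. ℤ) : Set ℤ := {x | (f x).isSome}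

/-- Range of a partial injective self-map of ℤ. -/
def PRan (f : ℤ ≃. ℤ) : Set ℤ := {y | (f.symm y).isSome}

/-- Membership in IO∞(ℤ): injective (built into `PEquiv`), monotone,
with cofinite domain and cofinite range. -/
def IOZ (f : ℤ ≃. ℤ) : Prop :=
  PMono f ∧ (PDom f)ᶜ.Finite ∧ (PRan f)ᶜ.Finite

/-- Idempotent element of IO∞(ℤ). -/
def IsIdem (ε : ℤ ≃. ℤ) : Prop := ε.trans ε = ε

/-- Membership in the direct power (IO∞(ℤ))ⁿ. -/
def IOZn (n : ℕ) (α : Fin n → ℤ ≃. ℤ) : Prop := ∀ i, IOZ (α i)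

/-- Coordinatewise composition on the direct power (α then β, as in the paper). -/
def mulN {n : ℕ} (α β : Fin n → ℤ ≃. ℤ) : Fin n → ℤ ≃. ℤ := fun i => (α i).trans (β i)

/-- The identity 𝕀 of (IO∞(ℤ))ⁿ. -/
def oneN (n : ℕ) : Fin n → ℤ ≃. ℤ := fun _ => PEquiv.refl ℤ

/-- εᵢ°: the tuple with ε in coordinate i and identities elsewhere. -/
def epsT {n : ℕ} (i : Fin n) (ε : ℤ ≃. ℤ) : Fin n → ℤ ≃. ℤ :=
  fun j => if j = i then ε else PEquiv.refl ℤ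

/-- A congruence on the semigroup (IO∞(ℤ))ⁿ (relative to the carrier `IOZn n`). -/
def IsCongOn (n : ℕ) (ρ : (Fin n → ℤ ≃. ℤ) → (Fin n → ℤ ≃. ℤ) → Prop) : Prop :=
  (∀ α, IOZn n α → ρ α α) ∧
  (∀ α β, IOZn n α → IOZn n β → ρ α β → ρ β α) ∧
  (∀ α β γ, IOZn n α → IOZn n β → IOZn n γ → ρ α β → ρ β γ → ρ α γ) ∧
  (∀ α β γ, IOZn n α → IOZn n β → IOZn n γ → ρ α β →
    ρ (mulN α γ) (mulN β γ) ∧ ρ (mulN γ α) (mulN γ β))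

/-- The congruence σ_[i]. -/
def sigmaI (n : ℕ) (i : Fin n) (α β : Fin n → ℤ ≃. ℤ) : Prop :=
  ∃ ε : ℤ ≃. ℤ, IOZ ε ∧ IsIdem ε ∧ mulN α (epsT i ε) = mulN β (epsT i ε)

/-- D(α,β): the set of coordinates where α and β differ. -/
def Dset {n : ℕ} (α β : Fin n → ℤ ≃. ℤ) : Set (Fin n) := {i | α i ≠ β i}

/-- Idempotent tuple. -/
def IsIdemN {n : ℕ} (ε : Fin n → ℤ ≃. ℤ) : Prop := ∀ i, (ε i).trans (ε i) = ε i

/-- σ_[i₁,…,i_k] for the set of indices t: α and β agree after right multiplication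
by a product ε°_{i₁}⋯ε°_{i_k} of idempotents supported on t. -/
def sigmaSet (n : ℕ) (t : Finset (Fin n)) (α β : Fin n → ℤ ≃. ℤ) : Prop :=
  ∃ ε : Fin n → ℤ ≃. ℤ, IOZn n ε ∧ IsIdemN ε ∧ (∀ i ∉ t, ε i = PEquiv.refl ℤ) ∧
    mulN α ε = mulN β ε

/-!
If `ρ ⊆ σ_[i]` relates `α ≠ β`, then `α` and `β` differ only in coordinate `i`. Multiplying on
the left by total order-embeddings of `ℤ` into the domains of the `αⱼ`, and on the right by the
inverses of the resulting total maps, turns the pair into `(𝕀, gᵢ°)` with `g ≠ 1`. Being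
`σ_[i]`-related to `𝕀`, `g` fixes all but finitely many points; a total monotone injection of `ℤ`
with that property is the identity, so `g` is undefined at some point. Conjugating by a suitable
total order-embedding then yields `(𝕀, (1_{ℤ∖{q}})ᵢ°)` for every `q`, products of these give
`(𝕀, εᵢ°)` for every idempotent `ε`, and finally `α σ_[i] β` gives `α ρ αεᵢ° = βεᵢ° ρ β`.
-/

open PEquiv

namespace Function.Injective

variable {α β : Type*} {f : α → β}

noncomputable def toPEquiv (hf : Injective f) : α ≃. β where
  toFun x := some (f x)
  invFun := partialInv f
  inv x y := (hf.isPartialInv x y).trans (by simp [eq_comm])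

@[simp]
lemma toPEquiv_apply (hf : Injective f) (x : α) : hf.toPEquiv x = some (f x) := rfl

@[simp]
lemma toPEquiv_symm_apply_self (hf : Injective f) (x : α) : hf.toPEquiv.symm (f x) = some x :=
  (eq_some_iff _).2 rfl

end Function.Injective

namespace PEquiv

variable {α β γ : Type*}

lemma trans_apply (f : α ≃. β) (g : β ≃. γ) (a : α) : f.trans g a = (f a).bind g := rfl

lemma ofSet_trans_ofSet (s t : Set α) [DecidablePred (· ∈ s)] [DecidablePred (· ∈ t)]
    [DecidablePred (· ∈ s ∩ t)] : (ofSet s).trans (ofSet t) = ofSet (s ∩ t) := by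
  ext x y
  simp only [trans_eq_some, ofSet_eq_some_iff, Set.mem_inter_iff]
  grind

lemma eq_ofSet_of_trans_self {ε : α ≃. α} (h : ε.trans ε = ε) :
    ε = ofSet {x | (ε x).isSome} := by
  ext x y
  rw [ofSet_eq_some_iff, Set.mem_ofPred, Option.isSome_iff_exists]
  constructor
  · intro hxy
    obtain ⟨z, hxz, hzy⟩ := (trans_eq_some ε ε x y).1 (h.symm ▸ hxy)
    obtain rfl : z = y := Option.some_injective _ (hxz.symm.trans hxy)
    exact ⟨ε.inj hzy hxy, _, hzy⟩
  · rintro ⟨rfl, z, hyz⟩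
    obtain ⟨w, hyw, hwz⟩ := (trans_eq_some ε ε _ z).1 (h.symm ▸ hyz)
    obtain rfl : w = z := Option.some_injective _ (hyw.symm.trans hyz)
    rwa [← ε.inj hwz hyz]

end PEquiv

section IOZ

variable {f g : ℤ ≃. ℤ}

lemma PMono.lt (hf : PMono f) {x y a b : ℤ} (ha : f x = some a) (hb : f y = some b)
    (hxy : x < y) : a < b :=
  (hf x y a b ha hb hxy.le).lt_of_ne fun hab => hxy.ne (f.inj ha (hab ▸ hb))

lemma PMono.symm (hf : PMono f) : PMono f.symm := by
  intro x y a b ha hb hxy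
  rw [Option.mem_def, eq_some_iff] at ha hb
  by_contra! hba
  exact (hf.lt hb ha hba).not_ge hxy

lemma PMono.trans (hf : PMono f) (hg : PMono g) : PMono (f.trans g) := by
  intro x y a b ha hb hxy
  obtain ⟨c, hxc, hca⟩ := (trans_eq_some f g x a).1 ha
  obtain ⟨d, hyd, hdb⟩ := (trans_eq_some f g y b).1 hb
  exact hg c d a b hca hdb (hf x y c d hxc hyd hxy)

lemma compl_pDom_trans_finite (hf : (PDom f)ᶜ.Finite) (hg : (PDom g)ᶜ.Finite) :
    (PDom (f.trans g))ᶜ.Finite := by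
  have hS : {x | ∃ y, f x = some y ∧ g y = none}.Finite := by
    refine Set.Finite.of_finite_image (f := (f : ℤ → Option ℤ)) ((hg.image some).subset ?_) ?_
    · rintro _ ⟨x, ⟨y, hxy, hy⟩, rfl⟩
      exact ⟨y, by simp [PDom, hy], hxy.symm⟩
    · rintro x₁ ⟨y₁, h₁, -⟩ x₂ ⟨y₂, h₂, -⟩ h
      rw [h₁, h₂, Option.some_inj] at h
      exact f.inj h₁ (h ▸ h₂)
  refine (hf.union hS).subset fun x hx => ?_
  replace hx : ((f x).bind g) = none := Option.not_isSome_iff_eq_none.1 hx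
  cases hfx : f x with
  | none => exact Or.inl (by simp [PDom, hfx])
  | some y => exact Or.inr ⟨y, hfx, by simpa [hfx] using hx⟩

lemma IOZ.symm (hf : IOZ f) : IOZ f.symm := ⟨hf.1.symm, hf.2.2, hf.2.1⟩

lemma IOZ.trans (hf : IOZ f) (hg : IOZ g) : IOZ (f.trans g) :=
  ⟨hf.1.trans hg.1, compl_pDom_trans_finite hf.2.1 hg.2.1,
    compl_pDom_trans_finite (f := g.symm) (g := f.symm) hg.2.2 hf.2.2⟩

lemma ioz_ofSet {s : Set ℤ} [DecidablePred (· ∈ s)] (hs : sᶜ.Finite) : IOZ (ofSet s) := by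
  refine ⟨fun x y a b ha hb hxy => ?_, ?_, ?_⟩
  · rw [Option.mem_def, ofSet_eq_some_iff] at ha hb
    rwa [ha.1, hb.1]
  all_goals
    convert hs using 2
    ext x
    simp [PDom, PRan, Option.isSome_iff_exists]

lemma ioz_refl : IOZ (PEquiv.refl ℤ) := by
  simpa using ioz_ofSet (s := Set.univ) (by simp)

lemma ioz_toPEquiv {φ : ℤ → ℤ} (hφ : StrictMono φ) (hran : (Set.range φ)ᶜ.Finite) :
    IOZ hφ.injective.toPEquiv := by
  refine ⟨fun x y a b ha hb hxy => ?_, by simp [PDom], hran.subset fun y hy => ?_⟩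
  · simp only [Option.mem_def, Function.Injective.toPEquiv_apply, Option.some.injEq] at ha hb
    exact ha ▸ hb ▸ hφ.monotone hxy
  · rintro ⟨x, rfl⟩
    simp [PRan] at hy

end IOZ

lemma PMono.eq_refl_of_isSome {g : ℤ ≃. ℤ} (hg : PMono g) (htot : ∀ x, (g x).isSome)
    (hfix : {x | g x ≠ some x}.Finite) : g = PEquiv.refl ℤ := by
  choose φ hφ using fun x => Option.isSome_iff_exists.1 (htot x)
  -- `φ x - x` is monotone and vanishes far to the left and far to the right.
  have hmono : Monotone fun x => φ x - x := monotone_int_of_le_succ fun x => by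
    have := hg.lt (hφ x) (hφ (x + 1)) (Int.lt_succ x)
    omega
  have hfixed : ∀ a ∉ {x | g x ≠ some x}, φ a = a := fun a ha => by
    simpa [hφ a] using ha
  ext1 x
  obtain ⟨a, hax, ha⟩ := ((Set.Iic_infinite x).sdiff hfix).nonempty
  obtain ⟨b, hxb, hb⟩ := ((Set.Ici_infinite x).sdiff hfix).nonempty
  have h₁ := hmono (Set.mem_Iic.1 hax)
  have h₂ := hmono (Set.mem_Ici.1 hxb)
  simp only [hfixed a ha, hfixed b hb] at h₁ h₂
  rw [hφ x, refl_apply, Option.some_inj]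
  omega

lemma exists_strictMono_apply_eq_avoiding {F : Set ℤ} (hF : F.Finite) (p q : ℤ) :
    ∃ φ : ℤ → ℤ, StrictMono φ ∧ (Set.range φ)ᶜ.Finite ∧ φ q = p ∧ ∀ z ≠ q, φ z ∉ F := by
  obtain ⟨u, hu⟩ := (hF.insert p).bddAbove
  obtain ⟨l, hl⟩ := (hF.insert p).bddBelow
  have hp : l ≤ p ∧ p ≤ u := ⟨hl (F.mem_insert p), hu (F.mem_insert p)⟩
  let φ : ℤ → ℤ := fun z => if z < q then z - q + l else if z = q then p else z - q + u
  refine ⟨φ, fun x y hxy => ?_, (Set.finite_Icc l u).subset fun y hy => ?_, by simp [φ],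
    fun z hz hzF => ?_⟩
  · simp only [φ]
    split_ifs <;> omega
  · by_contra hlu
    refine hy (if hyl : y < l then ⟨y + q - l, ?_⟩ else ⟨y + q - u, ?_⟩)
    all_goals simp only [φ, Set.mem_Icc] at hlu ⊢; split_ifs <;> omega
  · have := hl (Set.mem_insert_of_mem p hzF)
    have := hu (Set.mem_insert_of_mem p hzF)
    simp only [φ] at *
    split_ifs at * <;> omega

lemma exists_strictMono_apply_zero_eq_forall_mem {D : Set ℤ} (hD : Dᶜ.Finite) {p : ℤ}
    (hp : p ∈ D) :
    ∃ φ : ℤ → ℤ, StrictMono φ ∧ (Set.range φ)ᶜ.Finite ∧ φ 0 = p ∧ ∀ z, φ z ∈ D := by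
  obtain ⟨φ, hφ, hran, hφ0, hφD⟩ := exists_strictMono_apply_eq_avoiding hD p 0
  refine ⟨φ, hφ, hran, hφ0, fun z => ?_⟩
  by_cases hz : z = 0
  · rwa [hz, hφ0]
  · simpa using hφD z hz

section Tuple

variable {n : ℕ}

lemma ioz_oneN : IOZn n (oneN n) := fun _ => ioz_refl

lemma ioz_epsT (i : Fin n) {ε : ℤ ≃. ℤ} (hε : IOZ ε) : IOZn n (epsT i ε) := fun j => by
  unfold epsT
  split_ifs
  exacts [hε, ioz_refl]

lemma IOZn.mulN {α β : Fin n → ℤ ≃. ℤ} (hα : IOZn n α) (hβ : IOZn n β) :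
    IOZn n (mulN α β) := fun j => (hα j).trans (hβ j)

lemma epsT_apply_self (i : Fin n) (ε : ℤ ≃. ℤ) : epsT i ε i = ε := if_pos rfl

lemma epsT_apply_of_ne {i j : Fin n} (h : j ≠ i) (ε : ℤ ≃. ℤ) :
    epsT i ε j = PEquiv.refl ℤ := if_neg h

lemma epsT_refl (i : Fin n) : epsT i (PEquiv.refl ℤ) = oneN n := by
  funext j
  unfold epsT oneN
  split_ifs <;> rfl

lemma mulN_oneN (α : Fin n → ℤ ≃. ℤ) : mulN α (oneN n) = α :=
  funext fun _ => trans_refl _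

lemma oneN_mulN (α : Fin n → ℤ ≃. ℤ) : mulN (oneN n) α = α :=
  funext fun _ => refl_trans _

lemma mulN_epsT_epsT (i : Fin n) (a b : ℤ ≃. ℤ) :
    mulN (epsT i a) (epsT i b) = epsT i (a.trans b) := by
  funext j
  unfold mulN epsT
  split_ifs
  exacts [rfl, trans_refl _]

variable {i : Fin n}

lemma sigmaI.apply_eq_of_ne {α β : Fin n → ℤ ≃. ℤ} (h : sigmaI n i α β) {j : Fin n}
    (hj : j ≠ i) : α j = β j := by
  obtain ⟨ε, -, -, heq⟩ := h
  simpa [mulN, epsT_apply_of_ne hj] using congrFun heq j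

lemma sigmaI.finite_nonfixed {g : ℤ ≃. ℤ} (h : sigmaI n i (oneN n) (epsT i g)) :
    {x | g x ≠ some x}.Finite := by
  obtain ⟨ε, hε, hidem, heq⟩ := h
  replace heq : ε = g.trans ε := by
    simpa [mulN, oneN, epsT_apply_self] using congrFun heq i
  refine hε.2.1.subset fun x hgx hx => hgx ?_
  have hεx : ε x = some x := by
    rw [eq_ofSet_of_trans_self hidem]
    exact ofSet_eq_some_self_iff.2 hx
  obtain ⟨w, hgw, hεw⟩ := (trans_eq_some g ε x x).1 (heq ▸ hεx)
  rwa [ε.inj hεw hεx] at hgw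

end Tuple

namespace IsCongOn

variable {n : ℕ} {i : Fin n} {ρ : (Fin n → ℤ ≃. ℤ) → (Fin n → ℤ ≃. ℤ) → Prop}

lemma rel_mulN_mulN (hρ : IsCongOn n ρ) {α β γ δ : Fin n → ℤ ≃. ℤ} (hα : IOZn n α)
    (hβ : IOZn n β) (hγ : IOZn n γ) (hδ : IOZn n δ) (h : ρ α β) :
    ρ (mulN (mulN γ α) δ) (mulN (mulN γ β) δ) :=
  (hρ.2.2.2 _ _ δ (hγ.mulN hα) (hγ.mulN hβ) hδ (hρ.2.2.2 α β γ hα hβ hγ h).2).1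

lemma rel_oneN_epsT_trans (hρ : IsCongOn n ρ) {a b : ℤ ≃. ℤ} (ha : IOZ a) (hb : IOZ b)
    (hρa : ρ (oneN n) (epsT i a)) (hρb : ρ (oneN n) (epsT i b)) :
    ρ (oneN n) (epsT i (a.trans b)) := by
  have h := (hρ.2.2.2 _ _ (epsT i b) ioz_oneN (ioz_epsT i ha) (ioz_epsT i hb) hρa).1
  rw [oneN_mulN, mulN_epsT_epsT] at h
  exact hρ.2.2.1 _ _ _ ioz_oneN (ioz_epsT i hb) (ioz_epsT i (ha.trans hb)) hρb h

lemma rel_oneN_epsT_conj (hρ : IsCongOn n ρ) {k m : ℤ ≃. ℤ} (hk : IOZ k)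
    (hk_total : ∀ x, (k x).isSome) (hm : IOZ m) (h : ρ (oneN n) (epsT i m)) :
    ρ (oneN n) (epsT i ((k.trans m).trans k.symm)) := by
  have h' := hρ.rel_mulN_mulN ioz_oneN (ioz_epsT i hm) (ioz_epsT i hk) (ioz_epsT i hk.symm) h
  rwa [mulN_oneN, mulN_epsT_epsT, mulN_epsT_epsT, mulN_epsT_epsT,
    trans_symm_eq_iff_forall_isSome.2 hk_total, epsT_refl] at h'

lemma rel_of_sigmaI (hρ : IsCongOn n ρ)
    (hidem : ∀ ε, IOZ ε → IsIdem ε → ρ (oneN n) (epsT i ε)) {γ δ : Fin n → ℤ ≃. ℤ}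
    (hγ : IOZn n γ) (hδ : IOZn n δ) (h : sigmaI n i γ δ) : ρ γ δ := by
  obtain ⟨ε, hε, hεidem, heq⟩ := h
  have hγε := (hρ.2.2.2 _ _ γ ioz_oneN (ioz_epsT i hε) hγ (hidem ε hε hεidem)).2
  have hδε := (hρ.2.2.2 _ _ δ ioz_oneN (ioz_epsT i hε) hδ (hidem ε hε hεidem)).2
  rw [mulN_oneN] at hγε hδε
  have hδε_ioz := hδ.mulN (ioz_epsT i hε)
  exact hρ.2.2.1 _ _ _ hγ hδε_ioz hδ (heq ▸ hγε) (hρ.2.1 _ _ hδ hδε_ioz hδε)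

end IsCongOn

section Cover

variable {n : ℕ} {i : Fin n} {ρ : (Fin n → ℤ ≃. ℤ) → (Fin n → ℤ ≃. ℤ) → Prop}

lemma exists_rel_oneN_epsT_ne_refl_of_apply (hρ : IsCongOn n ρ) {α β : Fin n → ℤ ≃. ℤ}
    (hα : IOZn n α) (hβ : IOZn n β) (hab : ρ α β) (hagree : ∀ j ≠ i, α j = β j) {x₀ y₀ : ℤ}
    (hαx₀ : α i x₀ = some y₀) (hβx₀ : β i x₀ ≠ some y₀) :
    ∃ g, IOZ g ∧ ρ (oneN n) (epsT i g) ∧ g ≠ PEquiv.refl ℤ := by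
  have hemb : ∀ j, ∃ φ : ℤ → ℤ, StrictMono φ ∧ (Set.range φ)ᶜ.Finite ∧ (j = i → φ 0 = x₀) ∧
      ∀ z, φ z ∈ PDom (α j) := by
    intro j
    obtain ⟨p, hp, hpi⟩ : ∃ p ∈ PDom (α j), j = i → p = x₀ := by
      by_cases hj : j = i
      · subst hj
        exact ⟨x₀, by simp [PDom, hαx₀], fun _ => rfl⟩
      · obtain ⟨p, hp⟩ := ((hα j).2.1.infinite_compl.mono fun _ h => not_not.1 h).nonempty
        exact ⟨p, hp, fun h => absurd h hj⟩
    obtain ⟨φ, hφ, hran, hφ0, hφD⟩ := exists_strictMono_apply_zero_eq_forall_mem (hα j).2.1 hp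
    exact ⟨φ, hφ, hran, fun h => hφ0.trans (hpi h), hφD⟩
  choose φ hφ hran hφi hφD using hemb
  set v : Fin n → ℤ ≃. ℤ := fun j => (hφ j).injective.toPEquiv
  have hv : IOZn n v := fun j => ioz_toPEquiv (hφ j) (hran j)
  set c := mulN v α
  have hc_apply : ∀ j z, c j z = α j (φ j z) := fun _ _ => rfl
  have hc_total : ∀ j z, (c j z).isSome := fun j z => hc_apply j z ▸ hφD j z
  have hc : IOZn n c := hv.mulN hα
  set g := ((v i).trans (β i)).trans (c i).symm
  have hvαu : mulN c (fun j => (c j).symm) = oneN n :=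
    funext fun j => trans_symm_eq_iff_forall_isSome.2 (hc_total j)
  have hvβu : mulN (mulN v β) (fun j => (c j).symm) = epsT i g := by
    funext j
    by_cases hj : j = i
    · subst hj
      rw [epsT_apply_self]
      rfl
    · rw [epsT_apply_of_ne hj]
      simpa [c, mulN, oneN, hagree j hj] using congrFun hvαu j
  refine ⟨g, ((hv i).trans (hβ i)).trans (hc i).symm, ?_, fun hg => hβx₀ ?_⟩
  · rw [← hvαu, ← hvβu]
    exact hρ.rel_mulN_mulN hα hβ hv (fun j => (hc j).symm) hab
  · -- `v i` sends `0` to `x₀`, where `α i` and `β i` disagree, so `g 0 ≠ some 0`.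
    have hg0 : g 0 = some 0 := by rw [hg]; rfl
    obtain ⟨w, hw, hcw⟩ := (trans_eq_some _ _ 0 0).1 hg0
    rw [eq_some_iff, hc_apply, hφi i rfl, hαx₀] at hcw
    rw [Option.some_inj.1 hcw, ← hφi i rfl]
    exact hw

lemma exists_rel_oneN_epsT_ne_refl (hρ : IsCongOn n ρ) {α β : Fin n → ℤ ≃. ℤ}
    (hα : IOZn n α) (hβ : IOZn n β) (hab : ρ α β) (hσ : sigmaI n i α β) (hne : α ≠ β) :
    ∃ g, IOZ g ∧ ρ (oneN n) (epsT i g) ∧ g ≠ PEquiv.refl ℤ := by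
  have hagree : ∀ j ≠ i, α j = β j := fun j hj => hσ.apply_eq_of_ne hj
  obtain ⟨x₀, hx₀⟩ : ∃ x₀, α i x₀ ≠ β i x₀ := by
    by_contra! h
    exact hne (funext fun j => if hj : j = i then hj ▸ PEquiv.ext h else hagree j hj)
  cases hαx₀ : α i x₀ with
  | some y₀ =>
    exact exists_rel_oneN_epsT_ne_refl_of_apply hρ hα hβ hab hagree hαx₀ (hαx₀ ▸ hx₀.symm)
  | none =>
    obtain ⟨y₀, hβx₀⟩ := Option.ne_none_iff_exists'.1 (hαx₀ ▸ hx₀.symm)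
    exact exists_rel_oneN_epsT_ne_refl_of_apply hρ hβ hα (hρ.2.1 _ _ hα hβ hab)
      (fun j hj => (hagree j hj).symm) hβx₀ (by simp [hαx₀])

/-- `g` is undefined at some `x₁`; conjugating by a total map sending `q` to `x₁` and everything
else to fixed points of `g` gives `ofSet {q}ᶜ`. -/
lemma rel_oneN_epsT_ofSet_compl_singleton (hρ : IsCongOn n ρ) {g : ℤ ≃. ℤ} (hg : IOZ g)
    (hfix : {x | g x ≠ some x}.Finite) (hρg : ρ (oneN n) (epsT i g)) (hne : g ≠ PEquiv.refl ℤ)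
    (q : ℤ) : ρ (oneN n) (epsT i (ofSet {q}ᶜ)) := by
  obtain ⟨x₁, hx₁⟩ : ∃ x₁, g x₁ = none := by
    by_contra! h
    exact hne (hg.1.eq_refl_of_isSome (fun x => Option.isSome_iff_ne_none.2 (h x)) hfix)
  obtain ⟨φ, hφ, hran, hφq, hφfix⟩ := exists_strictMono_apply_eq_avoiding hfix x₁ q
  have hconj := hρ.rel_oneN_epsT_conj (ioz_toPEquiv hφ hran) (fun _ => rfl) hg hρg
  convert hconj using 3
  ext1 z
  by_cases hz : z = q
  · simp [trans_apply, hz, hφq, hx₁, Option.eq_none_iff_forall_ne_some]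
  · have hgz : g (φ z) = some (φ z) := by simpa using hφfix z hz
    simp [trans_apply, hz, hgz]

lemma rel_oneN_epsT_ofSet (hρ : IsCongOn n ρ)
    (hsingle : ∀ q : ℤ, ρ (oneN n) (epsT i (ofSet {q}ᶜ))) {s : Set ℤ} [DecidablePred (· ∈ s)]
    (hs : sᶜ.Finite) : ρ (oneN n) (epsT i (ofSet s)) := by
  classical
  suffices h : ∀ t : Set ℤ, t.Finite → ρ (oneN n) (epsT i (ofSet tᶜ)) by
    convert h sᶜ hs using 3
    simp
  intro t ht
  induction t, ht using Set.Finite.induction_on with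
  | empty => simpa [epsT_refl] using hρ.1 _ ioz_oneN
  | @insert a t _ ht ih =>
    have h := hρ.rel_oneN_epsT_trans (ioz_ofSet (by simp)) (ioz_ofSet (by simpa using ht))
      (hsingle a) ih
    rw [ofSet_trans_ofSet] at h
    convert h using 3
    rw [Set.insert_eq, Set.compl_union]

end Cover

/-- any congruence between the identity congruence Δ and σ_[i] equals
one of them (σ_[i] covers Δ). -/
theorem stmt16 (n : ℕ) (i : Fin n) (ρ : (Fin n → ℤ ≃. ℤ) → (Fin n → ℤ ≃. ℤ) → Prop)
    (hρ : IsCongOn n ρ)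
    (hsub : ∀ α β, IOZn n α → IOZn n β → ρ α β → sigmaI n i α β) :
    (∀ α β, IOZn n α → IOZn n β → (ρ α β ↔ α = β)) ∨
    (∀ α β, IOZn n α → IOZn n β → (ρ α β ↔ sigmaI n i α β)) := by
  by_cases htriv : ∀ α β, IOZn n α → IOZn n β → ρ α β → α = β
  · exact Or.inl fun α β hα hβ => ⟨htriv α β hα hβ, fun h => h ▸ hρ.1 α hα⟩
  push Not at htriv
  obtain ⟨α, β, hα, hβ, hab, hne⟩ := htriv
  obtain ⟨g, hg, hρg, hg_ne⟩ :=
    exists_rel_oneN_epsT_ne_refl hρ hα hβ hab (hsub α β hα hβ hab) hne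
  have hfix := (hsub _ _ ioz_oneN (ioz_epsT i hg) hρg).finite_nonfixed
  have hsingle := rel_oneN_epsT_ofSet_compl_singleton hρ hg hfix hρg hg_ne
  have hidem : ∀ ε, IOZ ε → IsIdem ε → ρ (oneN n) (epsT i ε) := fun ε hε hεidem => by
    rw [eq_ofSet_of_trans_self hεidem]
    exact rel_oneN_epsT_ofSet hρ hsingle hε.2.1
  exact Or.inr fun γ δ hγ hδ => ⟨hsub γ δ hγ hδ, hρ.rel_of_sigmaI hidem hγ hδ⟩
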